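/- Let M be a symmetric d × d real matrix with nonnegative entries that is hyperbolic, and let x, y, z ∈ ℝ₊^d be vectors with nonnegative coordinates. Writing M_{uv} := ⟨u, Mv⟩, we have M_{yy} · M_{xz}² + M_{zz} · M_{xy}² ≤ 2 · M_{xy} · M_{xz} · M_{yz}. -/
import Mathlib


open Matrix

set_option maxHeartbeats 1000000

lemma bsymm {d : ℕ} (M : Matrix (Fin d) (Fin d) ℝ) (hsymm : M.IsSymm)
    (u v : Fin d → ℝ) : u ⬝ᵥ (M *ᵥ v) = v ⬝ᵥ (M *ᵥ u) := by
  rw [dotProduct_mulVec, ← Matrix.mulVec_transpose, hsymm.eq, dotProduct_comm]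

lemma bnn {d : ℕ} (M : Matrix (Fin d) (Fin d) ℝ) (hnn : ∀ i j, 0 ≤ M i j)
    (u v : Fin d → ℝ) (hu : ∀ i, 0 ≤ u i) (hv : ∀ i, 0 ≤ v i) :
    0 ≤ u ⬝ᵥ (M *ᵥ v) := by
  simp only [dotProduct, Matrix.mulVec]
  apply Finset.sum_nonneg
  intro i _
  exact mul_nonneg (hu i) (Finset.sum_nonneg fun j _ => mul_nonneg (hnn i j) (hv j))

/-- A matrix `M` is hyperbolic if `⟨x, My⟩² ≥ ⟨x, Mx⟩·⟨y, My⟩` for all `x, y`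
with `⟨y, My⟩ ≥ 0`. -/
def IsHyperbolic {d : ℕ} (M : Matrix (Fin d) (Fin d) ℝ) : Prop :=
  ∀ x y : Fin d → ℝ, 0 ≤ y ⬝ᵥ (M *ᵥ y) →
    (x ⬝ᵥ (M *ᵥ x)) * (y ⬝ᵥ (M *ᵥ y)) ≤ (x ⬝ᵥ (M *ᵥ y)) ^ 2

/-- Lemma 4.3: for a nonnegative symmetric hyperbolic matrix `M` and nonnegative
vectors `x, y, z`, writing `M_{uv} = ⟨u, Mv⟩`,
`M_{yy} M_{xz}² + M_{zz} M_{xy}² ≤ 2 M_{xy} M_{xz} M_{yz}`. -/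
theorem stmt16 {d : ℕ} (M : Matrix (Fin d) (Fin d) ℝ)
    (hsymm : M.IsSymm) (hnn : ∀ i j, 0 ≤ M i j) (hhyp : IsHyperbolic M)
    (x y z : Fin d → ℝ) (hx : ∀ i, 0 ≤ x i) (hy : ∀ i, 0 ≤ y i) (hz : ∀ i, 0 ≤ z i) :
    (y ⬝ᵥ (M *ᵥ y)) * (x ⬝ᵥ (M *ᵥ z)) ^ 2 + (z ⬝ᵥ (M *ᵥ z)) * (x ⬝ᵥ (M *ᵥ y)) ^ 2 ≤
      2 * (x ⬝ᵥ (M *ᵥ y)) * (x ⬝ᵥ (M *ᵥ z)) * (y ⬝ᵥ (M *ᵥ z)) := by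
  by_contra hcon
  push_neg at hcon
  set a := x ⬝ᵥ (M *ᵥ y) with ha
  set b := x ⬝ᵥ (M *ᵥ z) with hb
  set w : Fin d → ℝ := b • y - a • z with hw
  have hsy := bsymm M hsymm
  have hBw : ∀ u : Fin d → ℝ,
      u ⬝ᵥ (M *ᵥ w) = b * (u ⬝ᵥ (M *ᵥ y)) - a * (u ⬝ᵥ (M *ᵥ z)) := by
    intro u
    simp [hw, Matrix.mulVec_sub, Matrix.mulVec_smul, dotProduct_sub, dotProduct_smul,
      smul_eq_mul]
  have hxw : x ⬝ᵥ (M *ᵥ w) = 0 := by rw [hBw]; ring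
  have hyw : y ⬝ᵥ (M *ᵥ w) = b * (y ⬝ᵥ (M *ᵥ y)) - a * (y ⬝ᵥ (M *ᵥ z)) := hBw y
  have hzw : z ⬝ᵥ (M *ᵥ w) = b * (y ⬝ᵥ (M *ᵥ z)) - a * (z ⬝ᵥ (M *ᵥ z)) := by
    rw [hBw, hsy z y]
  have hww : w ⬝ᵥ (M *ᵥ w) = b * (y ⬝ᵥ (M *ᵥ w)) - a * (z ⬝ᵥ (M *ᵥ w)) := by
    rw [hBw, hsy w y, hsy w z]
  have hwwpos : 0 < w ⬝ᵥ (M *ᵥ w) := by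
    rw [hww, hyw, hzw]; nlinarith [hcon]
  have h1 := hhyp x w hwwpos.le
  rw [hxw] at h1
  have hxxnn := bnn M hnn x x hx hx
  have hxx0 : x ⬝ᵥ (M *ᵥ x) = 0 := by nlinarith [h1, hwwpos, hxxnn]
  have key : ∀ u : Fin d → ℝ, (∀ i, 0 ≤ u i) → x ⬝ᵥ (M *ᵥ u) = 0 := by
    intro u hu
    have hcnn : 0 ≤ x ⬝ᵥ (M *ᵥ u) := bnn M hnn x u hx hu
    rcases eq_or_lt_of_le hcnn with h | h
    · exact h.symm
    exfalso
    have hc := hhyp u w hwwpos.le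
    set c := (u ⬝ᵥ (M *ᵥ w)) ^ 2 - (u ⬝ᵥ (M *ᵥ u)) * (w ⬝ᵥ (M *ᵥ w)) with hcdef
    have hc0 : 0 ≤ c := by rw [hcdef]; linarith
    set t := (x ⬝ᵥ (M *ᵥ u)) * (w ⬝ᵥ (M *ᵥ w)) / (c + 1) with htdef
    have htpos : 0 < t := div_pos (mul_pos h hwwpos) (by linarith)
    have hteq : t * (c + 1) = (x ⬝ᵥ (M *ᵥ u)) * (w ⬝ᵥ (M *ᵥ w)) := by
      rw [htdef]; field_simp
    have h2 := hhyp (x + t • u) w hwwpos.le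
    have e1 : (x + t • u) ⬝ᵥ (M *ᵥ (x + t • u)) =
        x ⬝ᵥ (M *ᵥ x) + 2 * t * (x ⬝ᵥ (M *ᵥ u)) + t ^ 2 * (u ⬝ᵥ (M *ᵥ u)) := by
      simp only [Matrix.mulVec_add, Matrix.mulVec_smul, dotProduct_add, add_dotProduct,
        dotProduct_smul, smul_dotProduct, smul_eq_mul, hsy u x]
      ring
    have e2 : (x + t • u) ⬝ᵥ (M *ᵥ w) = t * (u ⬝ᵥ (M *ᵥ w)) := by
      simp only [add_dotProduct, smul_dotProduct, smul_eq_mul, hxw]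
      ring
    rw [e1, e2, hxx0] at h2
    have h3 : 2 * t * (x ⬝ᵥ (M *ᵥ u)) * (w ⬝ᵥ (M *ᵥ w)) ≤ t ^ 2 * c := by
      rw [hcdef]; nlinarith [h2]
    have h4 : t * (t * (c + 1)) = t * ((x ⬝ᵥ (M *ᵥ u)) * (w ⬝ᵥ (M *ᵥ w))) := by
      rw [hteq]
    nlinarith [h3, h4, hc0, mul_pos htpos (mul_pos h hwwpos), mul_self_nonneg t]
  have ha0 : a = 0 := key y hy
  have hb0 : b = 0 := key z hz
  rw [ha0, hb0] at hcon
  simp at hcon
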